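/- arXiv:2507.04713 — 3 statements merged into one kernel-verified Lean document; each statement's English description precedes it below -/
import Mathlib

section
/- Suppose (v*, z*) lies in the auxiliary feasible set Ξ' and maximizes Φ(M'(v,z)) over all (v,z) ∈ Ξ', where Φ : Matrix (Fin m) (Fin m) ℝ → ℝ is an arbitrary criterion function. Then the exact design w* := κ(v*, z*) maximizes Φ(M(w)) over the LAS-constrained set: w* ∈ Ξ_N(a,c,b) and Φ(M(w)) ≤ Φ(M(w*)) for every w ∈ Ξ_N(a,c,b). -/
open Matrix

/-- Support indicator of an exact design. -/
def suppInd {n : ℕ} (w : Fin n → ℕ) : Fin n → ℕ := fun i => if 0 < w i then 1 else 0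

/-- The LAS-constrained set of exact designs of size `N`. -/
def XiLAS (n K N : ℕ) (a c : Fin n → Fin K → ℝ) (b : Fin K → ℝ) : Set (Fin n → ℕ) :=
  {w | (∀ k, (∑ i, a i k * (w i : ℝ)) + (∑ i, c i k * (suppInd w i : ℝ)) ≤ b k) ∧
       (∑ i, w i) = N}

/-- The auxiliary feasible set of auxiliary designs `(v, z)`. -/
def AuxFeas (n K N r : ℕ) (j₀ : Fin r) (a c : Fin n → Fin K → ℝ) (b : Fin K → ℝ) :
    Set ((Fin n × Fin r → ℕ) × (Fin n → ℕ)) :=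
  {vz | (∀ i j, vz.1 (i, j) = vz.1 (i, j₀)) ∧
        (∀ i, vz.2 i ≤ 1) ∧
        (∀ i, vz.2 i ≤ vz.1 (i, j₀) ∧ vz.1 (i, j₀) ≤ N * vz.2 i) ∧
        (∀ k, (∑ i, a i k * (vz.1 (i, j₀) : ℝ)) + (∑ i, c i k * (vz.2 i : ℝ)) ≤ b k) ∧
        (∑ i, vz.1 (i, j₀)) = N}

/-- The conversion map from auxiliary designs to exact designs. -/
def kappa {n r : ℕ} (j₀ : Fin r) (vz : (Fin n × Fin r → ℕ) × (Fin n → ℕ)) : Fin n → ℕ :=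
  fun i => vz.1 (i, j₀)

/-- Elementary information matrix at design point `i`. -/
def elemInfo {n r m : ℕ} (f : Fin n → Fin r → (Fin m → ℝ)) (i : Fin n) :
    Matrix (Fin m) (Fin m) ℝ :=
  ∑ j, vecMulVec (f i j) (f i j)

/-- Information matrix of an exact design `w`. -/
def infoMat {n r m : ℕ} (f : Fin n → Fin r → (Fin m → ℝ)) (w : Fin n → ℕ) :
    Matrix (Fin m) (Fin m) ℝ :=
  ∑ i, (w i : ℝ) • elemInfo f i

/-- Auxiliary information matrix of an auxiliary design `(v, z)`. -/
def auxInfoMat {n r m : ℕ} (f : Fin n → Fin r → (Fin m → ℝ))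
    (vz : (Fin n × Fin r → ℕ) × (Fin n → ℕ)) : Matrix (Fin m) (Fin m) ℝ :=
  ∑ i, ∑ j, (vz.1 (i, j) : ℝ) • vecMulVec (f i j) (f i j)

/-
On the auxiliary feasible set the constraints `z ≤ 1`, `z ≤ v`, `v ≤ N z` force `z` to
be the support indicator of `v`, and `v` does not depend on `j`; so `κ` maps `Ξ'` into
`Ξ_N(a,c,b)` and turns `M'` into `M`. Conversely every `w ∈ Ξ_N(a,c,b)` lifts to
`((i, j) ↦ w i, s_w) ∈ Ξ'` with the same information matrix, so an auxiliary optimum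
dominates every LAS-feasible design.
-/

lemma eq_ite_pos_of_le_of_le_mul {z v N : ℕ} (hz : z ≤ 1) (hzv : z ≤ v) (hvN : v ≤ N * z) :
    z = if 0 < v then 1 else 0 := by
  rcases Nat.le_one_iff_eq_zero_or_eq_one.mp hz with rfl | rfl <;> split_ifs <;> omega

lemma suppInd_le_one {n : ℕ} (w : Fin n → ℕ) (i : Fin n) : suppInd w i ≤ 1 := by
  unfold suppInd; split_ifs <;> omega

lemma suppInd_le {n : ℕ} (w : Fin n → ℕ) (i : Fin n) : suppInd w i ≤ w i := by
  unfold suppInd; split_ifs <;> omega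

lemma le_mul_suppInd {n N : ℕ} {w : Fin n → ℕ} (hw : ∀ i, w i ≤ N) (i : Fin n) :
    w i ≤ N * suppInd w i := by
  unfold suppInd; split_ifs <;> simp_all

section

variable {n K N r : ℕ} {j₀ : Fin r} {a c : Fin n → Fin K → ℝ} {b : Fin K → ℝ}

lemma auxInfoMat_eq_infoMat_kappa {m : ℕ} (f : Fin n → Fin r → (Fin m → ℝ))
    {vz : (Fin n × Fin r → ℕ) × (Fin n → ℕ)} (hconst : ∀ i j, vz.1 (i, j) = vz.1 (i, j₀)) :
    auxInfoMat f vz = infoMat f (kappa j₀ vz) := by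
  simp only [auxInfoMat, infoMat, elemInfo, kappa, Finset.smul_sum, hconst]

lemma suppInd_kappa_of_mem_AuxFeas {vz : (Fin n × Fin r → ℕ) × (Fin n → ℕ)}
    (hvz : vz ∈ AuxFeas n K N r j₀ a c b) : suppInd (kappa j₀ vz) = vz.2 := by
  obtain ⟨-, hz, hzv, -, -⟩ := hvz
  funext i
  exact (eq_ite_pos_of_le_of_le_mul (hz i) (hzv i).1 (hzv i).2).symm

lemma kappa_mem_XiLAS {vz : (Fin n × Fin r → ℕ) × (Fin n → ℕ)}
    (hvz : vz ∈ AuxFeas n K N r j₀ a c b) : kappa j₀ vz ∈ XiLAS n K N a c b := by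
  have hsupp := suppInd_kappa_of_mem_AuxFeas hvz
  obtain ⟨-, -, -, hlin, hsum⟩ := hvz
  exact ⟨fun k => by simpa only [hsupp, kappa] using hlin k, hsum⟩

/-- The inverse of `kappa` on `Ξ'`: replicate `w` over `Fin r` and pair it with its support. -/
def liftDesign (r : ℕ) (w : Fin n → ℕ) : (Fin n × Fin r → ℕ) × (Fin n → ℕ) :=
  (fun p => w p.1, suppInd w)

lemma liftDesign_mem_AuxFeas {w : Fin n → ℕ} (hw : w ∈ XiLAS n K N a c b) :
    liftDesign r w ∈ AuxFeas n K N r j₀ a c b := by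
  obtain ⟨hlin, hsum⟩ := hw
  have hle : ∀ i, w i ≤ N := fun i =>
    hsum ▸ Finset.single_le_sum (fun j _ => Nat.zero_le (w j)) (Finset.mem_univ i)
  exact ⟨fun _ _ => rfl, suppInd_le_one w, fun i => ⟨suppInd_le w i, le_mul_suppInd hle i⟩,
    hlin, hsum⟩

lemma auxInfoMat_liftDesign {m : ℕ} (f : Fin n → Fin r → (Fin m → ℝ)) (w : Fin n → ℕ) :
    auxInfoMat f (liftDesign r w) = infoMat f w := by
  simp only [auxInfoMat, infoMat, elemInfo, liftDesign, Finset.smul_sum]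

end

theorem auxiliary_optimum_transfers_general (n K N r m : ℕ) (j₀ : Fin r)
    (a c : Fin n → Fin K → ℝ) (b : Fin K → ℝ)
    (f : Fin n → Fin r → (Fin m → ℝ))
    (Φ : Matrix (Fin m) (Fin m) ℝ → ℝ)
    (vz : (Fin n × Fin r → ℕ) × (Fin n → ℕ))
    (hfeas : vz ∈ AuxFeas n K N r j₀ a c b)
    (hopt : ∀ vz' ∈ AuxFeas n K N r j₀ a c b,
      Φ (auxInfoMat f vz') ≤ Φ (auxInfoMat f vz)) :
    kappa j₀ vz ∈ XiLAS n K N a c b ∧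
      ∀ w ∈ XiLAS n K N a c b, Φ (infoMat f w) ≤ Φ (infoMat f (kappa j₀ vz)) := by
  refine ⟨kappa_mem_XiLAS hfeas, fun w hw => ?_⟩
  calc Φ (infoMat f w) = Φ (auxInfoMat f (liftDesign r w)) := by rw [auxInfoMat_liftDesign]
    _ ≤ Φ (auxInfoMat f vz) := hopt _ (liftDesign_mem_AuxFeas hw)
    _ = Φ (infoMat f (kappa j₀ vz)) := by rw [auxInfoMat_eq_infoMat_kappa f hfeas.1]

/-- If `(v*, z*)` is feasible for the auxiliary problem and maximizes the criterion
`Φ` of the auxiliary information matrix over the auxiliary feasible set, then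
`κ(v*, z*)` is feasible for the LAS-constrained primary problem and maximizes
`Φ` of the information matrix over the LAS-constrained set. -/
theorem auxiliary_optimum_transfers (n K N r m : ℕ) (hr : 1 ≤ r) (j₀ : Fin r)
    (a c : Fin n → Fin K → ℝ) (b : Fin K → ℝ)
    (f : Fin n → Fin r → (Fin m → ℝ))
    (Φ : Matrix (Fin m) (Fin m) ℝ → ℝ)
    (vz : (Fin n × Fin r → ℕ) × (Fin n → ℕ))
    (hfeas : vz ∈ AuxFeas n K N r j₀ a c b)
    (hopt : ∀ vz' ∈ AuxFeas n K N r j₀ a c b,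
      Φ (auxInfoMat f vz') ≤ Φ (auxInfoMat f vz)) :
    kappa j₀ vz ∈ XiLAS n K N a c b ∧
      ∀ w ∈ XiLAS n K N a c b, Φ (infoMat f w) ≤ Φ (infoMat f (kappa j₀ vz)) :=
  auxiliary_optimum_transfers_general n K N r m j₀ a c b f Φ vz hfeas hopt
end

section
/- The sets of attainable criterion values of the primary and the auxiliary problem coincide: for every criterion function Φ : Matrix (Fin m) (Fin m) ℝ → ℝ, the image set {Φ(M(w)) : w ∈ Ξ_N(a,c,b)} equals the image set {Φ(M'(v,z)) : (v,z) ∈ Ξ'}. -/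
open Matrix

lemma auxInfo_eq_info {n r m : ℕ} (j₀ : Fin r) (f : Fin n → Fin r → (Fin m → ℝ))
    (vz : (Fin n × Fin r → ℕ) × (Fin n → ℕ)) (h : ∀ i j, vz.1 (i, j) = vz.1 (i, j₀)) :
    auxInfoMat f vz = infoMat f (kappa j₀ vz) := by
  unfold auxInfoMat infoMat elemInfo kappa
  refine Finset.sum_congr rfl fun i _ => ?_
  rw [Finset.smul_sum]
  refine Finset.sum_congr rfl fun j _ => ?_
  rw [h i j]

/-- The sets of attainable criterion values of the primary LAS-constrained problem
and the auxiliary problem coincide. -/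
theorem attainable_criterion_values_eq (n K N r m : ℕ) (hr : 1 ≤ r) (j₀ : Fin r)
    (a c : Fin n → Fin K → ℝ) (b : Fin K → ℝ)
    (f : Fin n → Fin r → (Fin m → ℝ))
    (Φ : Matrix (Fin m) (Fin m) ℝ → ℝ) :
    (fun w => Φ (infoMat f w)) '' XiLAS n K N a c b =
      (fun vz => Φ (auxInfoMat f vz)) '' AuxFeas n K N r j₀ a c b := by
  ext x
  simp only [Set.mem_image]
  constructor
  · rintro ⟨w, ⟨hcon, hsum⟩, rfl⟩
    refine ⟨⟨fun p => w p.1, suppInd w⟩, ?_, ?_⟩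
    · refine ⟨fun i j => rfl, fun i => ?_, fun i => ⟨?_, ?_⟩, hcon, hsum⟩
      · dsimp only; unfold suppInd; split <;> omega
      · dsimp only; unfold suppInd; split <;> omega
      · dsimp only; unfold suppInd
        split
        · simp only [mul_one]
          calc w i ≤ ∑ i', w i' := Finset.single_le_sum (fun i' _ => Nat.zero_le _) (Finset.mem_univ i)
            _ = N := hsum
        · omega
    · have := auxInfo_eq_info (n := n) j₀ f ⟨fun p => w p.1, suppInd w⟩ (fun i j => rfl)
      rw [this]; rfl
  · rintro ⟨vz, ⟨hc, hz1, hvz, hcon, hsum⟩, rfl⟩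
    refine ⟨kappa j₀ vz, ⟨?_, hsum⟩, ?_⟩
    · intro k
      have hsupp : ∀ i, suppInd (kappa j₀ vz) i = vz.2 i := by
        intro i
        have h1 := (hvz i).1
        have h2 := (hvz i).2
        have hz := hz1 i
        unfold suppInd kappa
        split <;> rename_i h
        · rcases Nat.eq_zero_or_pos (vz.2 i) with h0 | hp
          · exfalso; rw [h0] at h2; omega
          · omega
        · omega
      have : ∑ i, c i k * (suppInd (kappa j₀ vz) i : ℝ) = ∑ i, c i k * (vz.2 i : ℝ) := by
        refine Finset.sum_congr rfl fun i _ => by rw [hsupp i]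
      rw [this]
      exact hcon k
    · rw [auxInfo_eq_info j₀ f vz hc]
end

section
/- The map κ is surjective from Ξ' onto Ξ_N(a,c,b): for every exact design w ∈ Ξ_N(a,c,b), the auxiliary design (v,z) defined by v(i,j) = w(i) for all i ∈ Fin n, j ∈ Fin r, and z(i) = s_w(i) (i.e., z(i) = 1 if w(i) > 0 and z(i) = 0 otherwise) belongs to Ξ' and satisfies κ(v,z) = w. -/
open Matrix

/-- `κ` is surjective from the auxiliary feasible set onto the LAS-constrained set:
the canonical lift of any `w ∈ Ξ_N(a,c,b)` is auxiliary-feasible and maps back to `w`. -/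
theorem kappa_surjective_onto_XiLAS (n K N r : ℕ) (hr : 1 ≤ r) (j₀ : Fin r)
    (a c : Fin n → Fin K → ℝ) (b : Fin K → ℝ)
    (w : Fin n → ℕ) (hw : w ∈ XiLAS n K N a c b) :
    ((fun p : Fin n × Fin r => w p.1, suppInd w) ∈ AuxFeas n K N r j₀ a c b) ∧
      kappa j₀ ((fun p : Fin n × Fin r => w p.1, suppInd w)) = w := by
  obtain ⟨hk, hsum⟩ := hw
  refine ⟨⟨fun i j => rfl, fun i => ?_, fun i => ⟨?_, ?_⟩, hk, hsum⟩, rfl⟩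
  · unfold suppInd; dsimp only; split <;> simp
  · unfold suppInd; dsimp only; split <;> omega
  · unfold suppInd
    dsimp only
    split
    · have : w i ≤ N := by
        rw [← hsum]
        exact Finset.single_le_sum (fun j _ => Nat.zero_le _) (Finset.mem_univ i)
      simpa using this
    · omega
end
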